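/- Let N ≥ 2 be an integer and m > 1, and set σ_c = 2(N−1)(m−1)/(3m+1). There exists σ1 ≥ σ_c (depending only on m and N) such that for every σ > σ1 there exists no good profile with interface for the profile ODE. -/

import Mathlib

/-!
In terms of `u = f ^ m` the profile equation reads
`u'' + (N - 1) / x * u' - u ^ (1 / m) / (m - 1) + x ^ σ * u = 0`, and along positive solutions the
derivative of the Pohozaev-type functional `pohozaev` is `x^(N-1)` times a positive combination of
`u'^2` and `u^((m+1)/m)` as soon as `σ > N (m - 1) / (m + 1)`. Let `a` be the last zero of `f`
before an interface `η`, or `a = 0` if there is none. Then the functional is strictly increasing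
on `[a, η]`, yet vanishes at both ends: at a zero of `f` because `u` and `u'` vanish there, and at
the origin because all its weights `x^N`, `x^(N-1)`, `x^(σ+N)` do (as `N > 1`).
-/

open Set

/-- One-sided derivative (on `[0,∞)`) of the `m`-th power of the profile. -/
noncomputable def Dm (m : ℝ) (f : ℝ → ℝ) : ℝ → ℝ :=
  derivWithin (fun ξ => f ξ ^ m) (Ici 0)

/-- Second one-sided derivative (on `[0,∞)`) of the `m`-th power of the profile. -/
noncomputable def D2m (m : ℝ) (f : ℝ → ℝ) : ℝ → ℝ :=
  derivWithin (Dm m f) (Ici 0)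

/-- A good profile for the ODE
`(f^m)'' + ((N-1)/ξ)(f^m)' - f/(m-1) + ξ^σ f^m = 0`:
a continuous nonnegative function on `[0,∞)` whose `m`-th power is twice
differentiable, solving the ODE wherever `f > 0`, and satisfying one of the
initial behaviors (P1), (P2), (P3). -/
structure GoodProfile (m σ N : ℝ) (f : ℝ → ℝ) : Prop where
  cont : ContinuousOn f (Ici 0)
  nonneg : ∀ ξ, 0 ≤ ξ → 0 ≤ f ξ
  diff1 : ∀ ξ, 0 ≤ ξ → DifferentiableWithinAt ℝ (fun ξ => f ξ ^ m) (Ici 0) ξ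
  diff2 : ∀ ξ, 0 ≤ ξ → DifferentiableWithinAt ℝ (Dm m f) (Ici 0) ξ
  ode : ∀ ξ, 0 < ξ → 0 < f ξ →
    D2m m f ξ + ((N - 1) / ξ) * Dm m f ξ - f ξ / (m - 1) + ξ ^ σ * f ξ ^ m = 0
  init : (0 < f 0 ∧ HasDerivWithinAt f 0 (Ici 0) 0)
    ∨ (f 0 = 0 ∧ Dm m f 0 = 0)
    ∨ (∃ ξ0 > (0:ℝ), f ξ0 = 0 ∧ Dm m f ξ0 = 0 ∧
        ∃ ε > (0:ℝ), ∀ ξ ∈ Ioo ξ0 (ξ0 + ε), 0 < f ξ)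

/-- A good profile has an interface at `η ∈ (0,∞)` if `f(η) = 0`, `(f^m)'(η) = 0`
and `f > 0` on a left-neighborhood of `η`. -/
def HasInterfaceAt (m : ℝ) (f : ℝ → ℝ) (η : ℝ) : Prop :=
  0 < η ∧ f η = 0 ∧ Dm m f η = 0 ∧ ∃ ε > (0:ℝ), ∀ ξ ∈ Ioo (η - ε) η, 0 < f ξ

noncomputable def pohozaev (m σ N : ℝ) (u u' : ℝ → ℝ) (x : ℝ) : ℝ :=
  x ^ N * u' x ^ 2 / 2 + (σ + N) / 2 * x ^ (N - 1) * (u x * u' x)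
    - m / ((m + 1) * (m - 1)) * x ^ N * u x ^ ((m + 1) / m) + x ^ (σ + N) * u x ^ 2 / 2

section Pohozaev

variable {m σ N : ℝ} {u u' : ℝ → ℝ}

theorem pohozaev_of_eq_zero {x : ℝ} (hm : 0 < m) (hu : u x = 0) (hu' : u' x = 0) :
    pohozaev m σ N u u' x = 0 := by
  simp [pohozaev, hu, hu', Real.zero_rpow (by positivity : (m + 1) / m ≠ 0)]

theorem pohozaev_zero (hN : 1 < N) (hσ : 0 ≤ σ) : pohozaev m σ N u u' 0 = 0 := by
  simp [pohozaev, Real.zero_rpow, (by linarith : N ≠ 0), sub_ne_zero.2 hN.ne',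
    (by linarith : σ + N ≠ 0)]

theorem continuousOn_pohozaev {s : Set ℝ} (hm : 0 < m) (hN : 1 ≤ N) (hσ : 0 ≤ σ)
    (hu : ContinuousOn u s) (hu' : ContinuousOn u' s) :
    ContinuousOn (pohozaev m σ N u u') s := by
  have hpow {p : ℝ} (hp : 0 ≤ p) : ContinuousOn (fun x : ℝ => x ^ p) s :=
    continuousOn_id.rpow_const fun _ _ => .inr hp
  have hup : ContinuousOn (fun x => u x ^ ((m + 1) / m)) s :=
    hu.rpow_const fun _ _ => .inr (by positivity)
  exact ((((hpow (by linarith)).mul (hu'.pow 2)).div_const 2).add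
    ((continuousOn_const.mul (hpow (by linarith))).mul (hu.mul hu'))).sub
    ((continuousOn_const.mul (hpow (by linarith))).mul hup) |>.add
    (((hpow (by linarith)).mul (hu.pow 2)).div_const 2)

theorem hasDerivAt_pohozaev {x u'' : ℝ} (hm : 1 < m) (hx : 0 < x)
    (hu : 0 < u x) (hdu : HasDerivAt u (u' x) x) (hdu' : HasDerivAt u' u'' x)
    (hode : u'' + (N - 1) / x * u' x - u x ^ (1 / m) / (m - 1) + x ^ σ * u x = 0) :
    HasDerivAt (pohozaev m σ N u u')
      (x ^ (N - 1) * ((σ + 2) / 2 * u' x ^ 2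
        + (σ * (m + 1) - N * (m - 1)) / (2 * (m + 1) * (m - 1)) * u x ^ ((m + 1) / m))) x := by
  have hpow {p : ℝ} : HasDerivAt (fun y => y ^ p) (p * x ^ (p - 1)) x :=
    Real.hasDerivAt_rpow_const (.inl hx.ne')
  have hup : HasDerivAt (fun y => u y ^ ((m + 1) / m))
      ((m + 1) / m * u x ^ ((m + 1) / m - 1) * u' x) x :=
    (Real.hasDerivAt_rpow_const (.inl hu.ne')).comp x hdu
  refine ((((hpow.mul (hdu'.pow 2)).div_const 2).add
    ((hpow.const_mul ((σ + N) / 2)).mul (hdu.mul hdu'))).sub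
    ((hpow.const_mul (m / ((m + 1) * (m - 1)))).mul hup)).add
    ((hpow.mul (hdu.pow 2)).div_const 2) |>.congr_deriv ?_
  have hm0 : m ≠ 0 := by positivity
  have hm1 : m - 1 ≠ 0 := sub_ne_zero.2 hm.ne'
  have hm2 : m + 1 ≠ 0 := by positivity
  have hu'' : u'' = u x ^ (1 / m) / (m - 1) - x ^ σ * u x - (N - 1) / x * u' x := by linarith
  have hxN : x ^ N = x ^ (N - 1) * x := by
    rw [Real.rpow_sub_one hx.ne', div_mul_cancel₀ _ hx.ne']
  rw [Real.rpow_sub_one hx.ne' (N - 1), show (m + 1) / m - 1 = 1 / m by field_simp; ring,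
    show (m + 1) / m = 1 + 1 / m by field_simp, Real.rpow_add hu, Real.rpow_one,
    add_sub_assoc σ N 1, Real.rpow_add hx σ (N - 1), Real.rpow_add hx σ N, hxN, hu'']
  simp only [Pi.pow_apply, Pi.mul_apply]
  push_cast
  field_simp
  ring

theorem strictMonoOn_pohozaev {a b : ℝ} {u'' : ℝ → ℝ} (hm : 1 < m) (hN : 1 ≤ N)
    (hσ : N * (m - 1) / (m + 1) < σ) (ha : 0 ≤ a)
    (hu : ContinuousOn u (Icc a b)) (hu' : ContinuousOn u' (Icc a b))
    (hpos : ∀ x ∈ Ioo a b, 0 < u x) (hdu : ∀ x ∈ Ioo a b, HasDerivAt u (u' x) x)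
    (hdu' : ∀ x ∈ Ioo a b, HasDerivAt u' (u'' x) x)
    (hode : ∀ x ∈ Ioo a b,
      u'' x + (N - 1) / x * u' x - u x ^ (1 / m) / (m - 1) + x ^ σ * u x = 0) :
    StrictMonoOn (pohozaev m σ N u u') (Icc a b) := by
  have hσ0 : 0 ≤ σ := le_trans (by have := sub_pos.2 hm; positivity) hσ.le
  have hcoef : 0 < (σ * (m + 1) - N * (m - 1)) / (2 * (m + 1) * (m - 1)) := by
    have := sub_pos.2 hm
    rw [div_lt_iff₀ (by positivity)] at hσ
    exact div_pos (by linarith) (by positivity)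
  refine strictMonoOn_of_deriv_pos (convex_Icc a b)
    (continuousOn_pohozaev (by linarith) hN hσ0 hu hu') fun x hx => ?_
  rw [interior_Icc] at hx
  have hx0 : 0 < x := ha.trans_lt hx.1
  rw [(hasDerivAt_pohozaev hm hx0 (hpos x hx) (hdu x hx) (hdu' x hx) (hode x hx)).deriv]
  have := Real.rpow_pos_of_pos (hpos x hx) ((m + 1) / m)
  positivity

end Pohozaev

theorem ContinuousOn.exists_last_zero {f : ℝ → ℝ} {c b η : ℝ} (hcb : c ≤ b)
    (hf : ContinuousOn f (Icc c b)) (hne : ∀ x ∈ Ioo b η, f x ≠ 0) :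
    ∃ a ∈ Icc c b, (a = c ∨ c < a ∧ f a = 0) ∧ ∀ x ∈ Ioo a η, f x ≠ 0 := by
  have hZ : IsCompact (insert c (Icc c b ∩ f ⁻¹' {0})) :=
    (isCompact_Icc.of_isClosed_subset
      (hf.preimage_isClosed_of_isClosed isClosed_Icc isClosed_singleton)
      inter_subset_left).insert c
  obtain ⟨a, haZ, hmax⟩ := hZ.exists_isGreatest (insert_nonempty _ _)
  have hca : c ≤ a := hmax (mem_insert c _)
  refine ⟨a, ?_, ?_, fun x hx hfx => ?_⟩
  · rcases haZ with rfl | ⟨hab, -⟩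
    exacts [left_mem_Icc.2 hcb, hab]
  · rcases haZ with rfl | ⟨-, hfa⟩
    exacts [.inl rfl, hca.eq_or_lt.imp Eq.symm fun h => ⟨h, hfa⟩]
  · rcases le_or_gt x b with hxb | hbx
    · exact (hmax (.inr ⟨⟨hca.trans hx.1.le, hxb⟩, hfx⟩)).not_gt hx.1
    · exact hne x ⟨hbx, hx.2⟩ hfx

namespace GoodProfile

variable {m σ N : ℝ} {f : ℝ → ℝ}

theorem hasDerivAt_rpow (hf : GoodProfile m σ N f) {x : ℝ} (hx : 0 < x) :
    HasDerivAt (fun ξ => f ξ ^ m) (Dm m f x) x :=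
  (hf.diff1 x hx.le).hasDerivWithinAt.hasDerivAt (Ici_mem_nhds hx)

theorem hasDerivAt_Dm (hf : GoodProfile m σ N f) {x : ℝ} (hx : 0 < x) :
    HasDerivAt (Dm m f) (D2m m f x) x :=
  (hf.diff2 x hx.le).hasDerivWithinAt.hasDerivAt (Ici_mem_nhds hx)

theorem ode_rpow (hf : GoodProfile m σ N f) (hm : m ≠ 0) {x : ℝ} (hx : 0 < x) (hfx : 0 < f x) :
    D2m m f x + (N - 1) / x * Dm m f x - (f x ^ m) ^ (1 / m) / (m - 1) + x ^ σ * f x ^ m = 0 := by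
  rw [← Real.rpow_mul hfx.le, mul_one_div_cancel hm, Real.rpow_one]
  exact hf.ode x hx hfx

theorem Dm_eq_zero_of_eq_zero (hf : GoodProfile m σ N f) (hm : m ≠ 0) {x : ℝ} (hx : 0 < x)
    (hfx : f x = 0) : Dm m f x = 0 := by
  have hmin : IsLocalMin (fun ξ => f ξ ^ m) x :=
    Filter.mem_of_superset (Ioi_mem_nhds hx) fun y hy => by
      simpa [hfx, Real.zero_rpow hm] using Real.rpow_nonneg (hf.nonneg y (le_of_lt hy)) m
  exact (hf.hasDerivAt_rpow hx).deriv ▸ hmin.deriv_eq_zero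

theorem strictMonoOn_pohozaev (hf : GoodProfile m σ N f) (hm : 1 < m) (hN : 1 ≤ N)
    (hσ : N * (m - 1) / (m + 1) < σ) {a b : ℝ} (ha : 0 ≤ a) (hpos : ∀ x ∈ Ioo a b, 0 < f x) :
    StrictMonoOn (pohozaev m σ N (fun ξ => f ξ ^ m) (Dm m f)) (Icc a b) := by
  have hsub : Icc a b ⊆ Ici 0 := fun x hx => ha.trans hx.1
  refine _root_.strictMonoOn_pohozaev hm hN hσ ha
    (fun x hx => ((hf.diff1 x (hsub hx)).continuousWithinAt).mono hsub)
    (fun x hx => ((hf.diff2 x (hsub hx)).continuousWithinAt).mono hsub)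
    (fun x hx => Real.rpow_pos_of_pos (hpos x hx) m)
    (fun x hx => hf.hasDerivAt_rpow (ha.trans_lt hx.1))
    (fun x hx => hf.hasDerivAt_Dm (ha.trans_lt hx.1))
    (fun x hx => hf.ode_rpow (by positivity) (ha.trans_lt hx.1) (hpos x hx))

end GoodProfile

/-- Theorem 1.5: for `N ≥ 2`, `m > 1`, there exists
`σ1 ≥ σ_c` (depending only on `m` and `N`) such that for every `σ > σ1` there
is no good profile with interface. -/
theorem no_goodProfile_with_interface_for_large_sigma
    (N : ℕ) (hN : 2 ≤ N) (m : ℝ) (hm : 1 < m) :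
    ∃ σ1 : ℝ, 2 * ((N : ℝ) - 1) * (m - 1) / (3 * m + 1) ≤ σ1 ∧
      ∀ σ : ℝ, σ1 < σ →
        ¬ ∃ f η, GoodProfile m σ (N : ℝ) f ∧ HasInterfaceAt m f η := by
  have hN1 : (1 : ℝ) < N := by exact_mod_cast hN
  have hm0 : 0 < m := by linarith
  refine ⟨N * (m - 1) / (m + 1), ?_, ?_⟩
  · rw [div_le_div_iff₀ (by linarith) (by linarith)]
    nlinarith [mul_pos (sub_pos.2 hN1) (sub_pos.2 hm)]
  rintro σ hσ ⟨f, η, hf, hη, hfη, hDη, ε, hε, hpos⟩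
  have hσ0 : 0 ≤ σ := le_trans (by have := sub_pos.2 hm; positivity) hσ.le
  obtain ⟨a, ⟨ha0, hab⟩, ha, hfne⟩ := (hf.cont.mono Icc_subset_Ici_self).exists_last_zero
    (le_max_right (η - ε) 0) fun x hx => (hpos x ⟨(le_max_left _ _).trans_lt hx.1, hx.2⟩).ne'
  have haη : a < η := hab.trans_lt (max_lt (by linarith) hη)
  have hPa : pohozaev m σ N (fun ξ => f ξ ^ m) (Dm m f) a = 0 := by
    rcases ha with rfl | ⟨ha, hfa⟩
    · exact pohozaev_zero hN1 hσ0
    · exact pohozaev_of_eq_zero hm0 (by simp [hfa, Real.zero_rpow hm0.ne'])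
        (hf.Dm_eq_zero_of_eq_zero hm0.ne' ha hfa)
  have hPη : pohozaev m σ N (fun ξ => f ξ ^ m) (Dm m f) η = 0 :=
    pohozaev_of_eq_zero hm0 (by simp [hfη, Real.zero_rpow hm0.ne']) hDη
  have hP := hf.strictMonoOn_pohozaev hm hN1.le hσ ha0
    (fun x hx => (hf.nonneg x (ha0.trans hx.1.le)).lt_of_ne (hfne x hx).symm)
    (left_mem_Icc.2 haη.le) (right_mem_Icc.2 haη.le) haη
  exact hP.ne (hPa.trans hPη.symm)
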